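/- Consider the canonical Poisson structure with brackets {τ^μ(x), P_ν(x')} = δ^μ_ν δ(x,x') on the embedding sector, all other brackets among (τ, P) vanishing, and suppose the constraint densities are H_μ = P_μ + H^{(φ)}_μ where H^{(φ)}_μ depends only on the field variables (φ, Π), which Poisson-commute with (τ, P). In the finite-dimensional analogue (canonical coordinates (q^A, p_A, τ^μ, P_μ) with {τ^μ, P_ν} = δ^μ_ν), if H(ξ) = Σ_μ ξ^μ(τ)(P_μ + h_μ(q,p)) and the unprojected constraints strongly commute ({P_μ + h_μ, P_ν + h_ν} = 0), then {H(ξ), H(ζ)} = -H([ξ, ζ]_{vf}) where [ξ,ζ]_{vf}^μ = ξ^ν ∂_ν ζ^μ - ζ^ν ∂_ν ξ^μ. -/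

import Mathlib

open scoped BigOperators

/-- Finite-dimensional canonical phase space with field variables `(q, p)` and
embedding variables `(τ, P)`. -/
abbrev Phase (n d : ℕ) : Type :=
  ((Fin n → ℝ) × (Fin n → ℝ)) × ((Fin d → ℝ) × (Fin d → ℝ))

/-- Canonical basis direction in the `q`-slot. -/
noncomputable def eQ {n d : ℕ} (A : Fin n) : Phase n d := ((Pi.single A 1, 0), (0, 0))

/-- Canonical basis direction in the `p`-slot. -/
noncomputable def eP {n d : ℕ} (A : Fin n) : Phase n d := ((0, Pi.single A 1), (0, 0))

/-- Canonical basis direction in the `τ`-slot. -/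
noncomputable def eT {n d : ℕ} (μ : Fin d) : Phase n d := ((0, 0), (Pi.single μ 1, 0))

/-- Canonical basis direction in the `P`-slot. -/
noncomputable def ePi {n d : ℕ} (μ : Fin d) : Phase n d := ((0, 0), (0, Pi.single μ 1))

/-- The canonical Poisson bracket on `Phase n d`, with `{q^A, p_B} = δ^A_B` and
`{τ^μ, P_ν} = δ^μ_ν`, all other brackets vanishing. -/
noncomputable def pb {n d : ℕ} (f g : Phase n d → ℝ) (z : Phase n d) : ℝ :=
  (∑ A : Fin n, (fderiv ℝ f z (eQ A) * fderiv ℝ g z (eP A)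
      - fderiv ℝ f z (eP A) * fderiv ℝ g z (eQ A)))
  + ∑ μ : Fin d, (fderiv ℝ f z (eT μ) * fderiv ℝ g z (ePi μ)
      - fderiv ℝ f z (ePi μ) * fderiv ℝ g z (eT μ))

/-- The smeared constraint functional `H(ξ)(z) = ∑_μ ξ^μ(τ) (P_μ + h_μ(q,p))`,
with smearing vector field `ξ` evaluated on the embedding variable `τ`. -/
noncomputable def Hsm {n d : ℕ} (h : Fin d → ((Fin n → ℝ) × (Fin n → ℝ)) → ℝ)
    (ξ : (Fin d → ℝ) → Fin d → ℝ) (z : Phase n d) : ℝ :=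
  ∑ μ : Fin d, ξ z.2.1 μ * (z.2.2 μ + h μ z.1)

/-- The vector field commutator `[ξ, ζ]_{vf}^μ = ξ^ν ∂_ν ζ^μ - ζ^ν ∂_ν ξ^μ`. -/
noncomputable def vfB {d : ℕ} (ξ ζ : (Fin d → ℝ) → Fin d → ℝ)
    (t : Fin d → ℝ) (μ : Fin d) : ℝ :=
  fderiv ℝ (fun s => ζ s μ) t (ξ t) - fderiv ℝ (fun s => ξ s μ) t (ζ t)

section aux
variable {n d : ℕ}

noncomputable def pF : Phase n d →L[ℝ] ((Fin n → ℝ) × (Fin n → ℝ)) :=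
  ContinuousLinearMap.fst ℝ _ _

noncomputable def pT : Phase n d →L[ℝ] (Fin d → ℝ) :=
  (ContinuousLinearMap.fst ℝ (Fin d → ℝ) (Fin d → ℝ)).comp (ContinuousLinearMap.snd ℝ _ _)

noncomputable def pP (μ : Fin d) : Phase n d →L[ℝ] ℝ :=
  (ContinuousLinearMap.proj μ).comp
    ((ContinuousLinearMap.snd ℝ (Fin d → ℝ) (Fin d → ℝ)).comp (ContinuousLinearMap.snd ℝ _ _))

lemma hasFDerivAt_term (h : Fin d → ((Fin n → ℝ) × (Fin n → ℝ)) → ℝ)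
    (hh : ∀ μ, ContDiff ℝ (⊤ : ℕ∞) (h μ))
    (ξ : (Fin d → ℝ) → Fin d → ℝ) (hξ : ContDiff ℝ (⊤ : ℕ∞) ξ) (z : Phase n d) (μ : Fin d) :
    HasFDerivAt (fun w : Phase n d => ξ w.2.1 μ * (w.2.2 μ + h μ w.1))
      (ξ z.2.1 μ • (pP μ + (fderiv ℝ (h μ) z.1).comp (pF (n := n) (d := d)))
        + (z.2.2 μ + h μ z.1) • ((fderiv ℝ (fun s => ξ s μ) z.2.1).comp pT)) z := by
  have hξc : Differentiable ℝ (fun s => ξ s μ) :=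
    (contDiff_pi.mp hξ μ).differentiable (by simp)
  have h1 : HasFDerivAt (fun w : Phase n d => ξ w.2.1 μ)
      ((fderiv ℝ (fun s => ξ s μ) z.2.1).comp pT) z :=
    by have := ((hξc z.2.1).hasFDerivAt).comp z (pT (n := n) (d := d)).hasFDerivAt; exact this
  have h2 : HasFDerivAt (fun w : Phase n d => w.2.2 μ + h μ w.1)
      (pP μ + (fderiv ℝ (h μ) z.1).comp (pF (n := n) (d := d))) z :=
    ((pP (n := n) μ).hasFDerivAt).add
      ((((hh μ).differentiable (by simp) z.1).hasFDerivAt).comp z (pF (n := n) (d := d)).hasFDerivAt)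
  exact h1.mul h2

lemma fderiv_Hsm_apply (h : Fin d → ((Fin n → ℝ) × (Fin n → ℝ)) → ℝ)
    (hh : ∀ μ, ContDiff ℝ (⊤ : ℕ∞) (h μ))
    (ξ : (Fin d → ℝ) → Fin d → ℝ) (hξ : ContDiff ℝ (⊤ : ℕ∞) ξ) (z v : Phase n d) :
    fderiv ℝ (Hsm h ξ) z v
      = ∑ μ : Fin d, (ξ z.2.1 μ * (v.2.2 μ + fderiv ℝ (h μ) z.1 v.1)
          + (z.2.2 μ + h μ z.1) * fderiv ℝ (fun s => ξ s μ) z.2.1 v.2.1) := by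
  have H : HasFDerivAt (Hsm h ξ)
      (∑ μ : Fin d, (ξ z.2.1 μ • (pP μ + (fderiv ℝ (h μ) z.1).comp (pF (n := n) (d := d)))
        + (z.2.2 μ + h μ z.1) • ((fderiv ℝ (fun s => ξ s μ) z.2.1).comp pT))) z := by
    have := HasFDerivAt.fun_sum (fun μ (_ : μ ∈ Finset.univ) => hasFDerivAt_term h hh ξ hξ z μ)
    exact this
  rw [H.fderiv]
  simp [ContinuousLinearMap.sum_apply, ContinuousLinearMap.add_apply,
    ContinuousLinearMap.smul_apply, ContinuousLinearMap.comp_apply, pP, pT, pF,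
    smul_eq_mul, mul_add]

lemma fderiv_K_apply (h : Fin d → ((Fin n → ℝ) × (Fin n → ℝ)) → ℝ)
    (hh : ∀ μ, ContDiff ℝ (⊤ : ℕ∞) (h μ)) (μ : Fin d) (z v : Phase n d) :
    fderiv ℝ (fun w : Phase n d => w.2.2 μ + h μ w.1) z v
      = v.2.2 μ + fderiv ℝ (h μ) z.1 v.1 := by
  have h2 : HasFDerivAt (fun w : Phase n d => w.2.2 μ + h μ w.1)
      (pP μ + (fderiv ℝ (h μ) z.1).comp (pF (n := n) (d := d))) z :=
    ((pP (n := n) μ).hasFDerivAt).add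
      ((((hh μ).differentiable (by simp) z.1).hasFDerivAt).comp z (pF (n := n) (d := d)).hasFDerivAt)
  rw [h2.fderiv]
  simp [pP, pF]

lemma clm_sum_single (L : (Fin d → ℝ) →L[ℝ] ℝ) (x : Fin d → ℝ) :
    ∑ ρ : Fin d, x ρ * L (Pi.single ρ 1) = L x := by
  have hx : x = ∑ ρ : Fin d, x ρ • (Pi.single ρ (1 : ℝ) : Fin d → ℝ) := by
    funext j
    simp [Pi.single_apply, Finset.sum_apply]
  conv_rhs => rw [hx]
  rw [map_sum]
  simp [smul_eq_mul]

lemma field_zero (ξv ζv : Fin d → ℝ) (a b : Fin d → Fin n → ℝ)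
    (h0 : ∀ μ ν, ∑ A : Fin n, (a μ A * b ν A - b μ A * a ν A) = 0) :
    ∑ A : Fin n, ((∑ μ : Fin d, ξv μ * a μ A) * (∑ ν : Fin d, ζv ν * b ν A)
      - (∑ μ : Fin d, ξv μ * b μ A) * (∑ ν : Fin d, ζv ν * a ν A)) = 0 := by
  have step1 : ∑ A : Fin n, ((∑ μ : Fin d, ξv μ * a μ A) * (∑ ν : Fin d, ζv ν * b ν A)
      - (∑ μ : Fin d, ξv μ * b μ A) * (∑ ν : Fin d, ζv ν * a ν A))
      = ∑ A : Fin n, ∑ μ : Fin d, ∑ ν : Fin d,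
          ξv μ * ζv ν * (a μ A * b ν A - b μ A * a ν A) := by
    refine Finset.sum_congr rfl fun A _ => ?_
    rw [Finset.sum_mul_sum, Finset.sum_mul_sum, ← Finset.sum_sub_distrib]
    refine Finset.sum_congr rfl fun μ _ => ?_
    rw [← Finset.sum_sub_distrib]
    exact Finset.sum_congr rfl fun ν _ => by ring
  rw [step1, Finset.sum_comm]
  have : ∀ μ : Fin d, ∑ A : Fin n, ∑ ν : Fin d, ξv μ * ζv ν * (a μ A * b ν A - b μ A * a ν A)
      = ∑ ν : Fin d, ξv μ * ζv ν * ∑ A : Fin n, (a μ A * b ν A - b μ A * a ν A) := by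
    intro μ
    rw [Finset.sum_comm]
    exact Finset.sum_congr rfl fun ν _ => (Finset.mul_sum _ _ _).symm
  simp [this, h0]

end aux

/-- If the unprojected constraints `P_μ + h_μ(q,p)` strongly Poisson-commute, then
the embedding-smeared constraints represent the (opposite) diffeomorphism algebra:
`{H(ξ), H(ζ)} = -H([ξ, ζ]_{vf})`. -/
theorem smeared_constraints_antirepresentation {n d : ℕ}
    (h : Fin d → ((Fin n → ℝ) × (Fin n → ℝ)) → ℝ)
    (hh : ∀ μ, ContDiff ℝ (⊤ : ℕ∞) (h μ))
    (ξ ζ : (Fin d → ℝ) → Fin d → ℝ)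
    (hξ : ContDiff ℝ (⊤ : ℕ∞) ξ) (hζ : ContDiff ℝ (⊤ : ℕ∞) ζ)
    (hstrong : ∀ (μ ν : Fin d) (z : Phase n d),
      pb (fun w => w.2.2 μ + h μ w.1) (fun w => w.2.2 ν + h ν w.1) z = 0) :
    ∀ z : Phase n d, pb (Hsm h ξ) (Hsm h ζ) z = -(Hsm h (vfB ξ ζ) z) := by
  intro z
  set τv : Fin d → ℝ := z.2.1 with hτv
  set a : Fin d → Fin n → ℝ := fun μ A => fderiv ℝ (h μ) z.1 (Pi.single A 1, 0) with ha
  set b : Fin d → Fin n → ℝ := fun μ A => fderiv ℝ (h μ) z.1 (0, Pi.single A 1) with hb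
  set K : Fin d → ℝ := fun μ => z.2.2 μ + h μ z.1 with hK
  -- evaluations of the differentials of the smeared constraints
  have evalQ : ∀ (χ : (Fin d → ℝ) → Fin d → ℝ) (hχ : ContDiff ℝ (⊤ : ℕ∞) χ) (A : Fin n),
      fderiv ℝ (Hsm h χ) z (eQ A) = ∑ μ : Fin d, χ τv μ * a μ A := by
    intro χ hχ A
    rw [fderiv_Hsm_apply h hh χ hχ]
    simp [eQ, a]
    rfl
  have evalP : ∀ (χ : (Fin d → ℝ) → Fin d → ℝ) (hχ : ContDiff ℝ (⊤ : ℕ∞) χ) (A : Fin n),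
      fderiv ℝ (Hsm h χ) z (eP A) = ∑ μ : Fin d, χ τv μ * b μ A := by
    intro χ hχ A
    rw [fderiv_Hsm_apply h hh χ hχ]
    simp [eP, b]
    rfl
  have evalT : ∀ (χ : (Fin d → ℝ) → Fin d → ℝ) (hχ : ContDiff ℝ (⊤ : ℕ∞) χ) (ρ : Fin d),
      fderiv ℝ (Hsm h χ) z (eT ρ)
        = ∑ μ : Fin d, K μ * fderiv ℝ (fun s => χ s μ) τv (Pi.single ρ 1) := by
    intro χ hχ ρ
    rw [fderiv_Hsm_apply h hh χ hχ]
    simp [eT, K, Prod.mk_zero_zero]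
    rfl
  have evalPi : ∀ (χ : (Fin d → ℝ) → Fin d → ℝ) (hχ : ContDiff ℝ (⊤ : ℕ∞) χ) (ρ : Fin d),
      fderiv ℝ (Hsm h χ) z (ePi ρ) = χ τv ρ := by
    intro χ hχ ρ
    rw [fderiv_Hsm_apply h hh χ hχ]
    simp [ePi, Prod.mk_zero_zero, Pi.single_apply, mul_ite]
    rfl
  -- extract the field part of strong commutation
  have hfield : ∀ μ ν : Fin d, ∑ A : Fin n, (a μ A * b ν A - b μ A * a ν A) = 0 := by
    intro μ ν
    have H := hstrong μ ν z
    unfold pb at H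
    simp only [fderiv_K_apply h hh] at H
    simpa [eQ, eP, eT, ePi, Prod.mk_zero_zero, a, b] using H
  -- expand the bracket
  unfold pb
  simp only [evalQ ξ hξ, evalP ξ hξ, evalQ ζ hζ, evalP ζ hζ,
    evalT ξ hξ, evalT ζ hζ, evalPi ξ hξ, evalPi ζ hζ]
  rw [field_zero (fun μ => ξ τv μ) (fun μ => ζ τv μ) a b hfield, zero_add]
  -- embedding part
  have step1 : ∀ ρ : Fin d,
      (∑ μ : Fin d, K μ * fderiv ℝ (fun s => ξ s μ) τv (Pi.single ρ 1)) * ζ τv ρ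
        - ξ τv ρ * ∑ μ : Fin d, K μ * fderiv ℝ (fun s => ζ s μ) τv (Pi.single ρ 1)
      = ∑ μ : Fin d, (K μ * (ζ τv ρ * fderiv ℝ (fun s => ξ s μ) τv (Pi.single ρ 1))
          - K μ * (ξ τv ρ * fderiv ℝ (fun s => ζ s μ) τv (Pi.single ρ 1))) := by
    intro ρ
    rw [Finset.sum_mul, Finset.mul_sum, ← Finset.sum_sub_distrib]
    exact Finset.sum_congr rfl fun μ _ => by ring
  rw [Finset.sum_congr rfl fun ρ _ => step1 ρ, Finset.sum_comm]
  have step2 : ∀ μ : Fin d,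
      ∑ ρ : Fin d, (K μ * (ζ τv ρ * fderiv ℝ (fun s => ξ s μ) τv (Pi.single ρ 1))
          - K μ * (ξ τv ρ * fderiv ℝ (fun s => ζ s μ) τv (Pi.single ρ 1)))
      = K μ * (fderiv ℝ (fun s => ξ s μ) τv (ζ τv) - fderiv ℝ (fun s => ζ s μ) τv (ξ τv)) := by
    intro μ
    rw [Finset.sum_sub_distrib, ← Finset.mul_sum, ← Finset.mul_sum,
      clm_sum_single, clm_sum_single, ← mul_sub]
  rw [Finset.sum_congr rfl fun μ _ => step2 μ]
  unfold Hsm vfB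
  rw [← Finset.sum_neg_distrib]
  exact Finset.sum_congr rfl fun μ _ => by ring
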